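/- Let H = {0, 89, 178, 267, 356, 445, 534} ⊆ ℤ/623ℤ and let B = {0, 1, 3, 41, 216, 444, 462, 589} ⊆ ℤ/623ℤ. Then H is a subgroup of ℤ/623ℤ of order 7, and the eleven difference sets Δ(8ⁱ·B) for i = 0, 1, …, 10 are pairwise disjoint, each has cardinality 56, each is disjoint from H, and their union together with H \ {0} is (ℤ/623ℤ) \ {0}. -/
import Mathlib


/-- The set of differences `ΔB = {a - c : a, c ∈ B, a ≠ c}`. -/
def diffSet (B : Finset (ZMod 623)) : Finset (ZMod 623) :=
  ((B ×ˢ B).filter fun p => p.1 ≠ p.2).image fun p => p.1 - p.2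

/-- The subgroup block `H = {0, 89, 178, 267, 356, 445, 534}` of `ℤ/623ℤ`. -/
def Hblock : Finset (ZMod 623) := {0, 89, 178, 267, 356, 445, 534}

/-- The base block `B`. -/
def baseBlock : Finset (ZMod 623) := {0, 1, 3, 41, 216, 444, 462, 589}

/-- The dilates `8ⁱ · B` of the base block, for `i = 0, 1, …, 10`. -/
def dilate (i : Fin 11) : Finset (ZMod 623) :=
  baseBlock.image fun x => (8 : ZMod 623) ^ (i : ℕ) * x


def sdisjF {α : Type*} [LinearOrder α] : Nat → List α → List α → Bool
  | 0, _, _ => false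
  | _+1, [], _ => true
  | _+1, _::_, [] => true
  | n+1, a::as, b::bs =>
    if a < b then sdisjF n as (b::bs)
    else if b < a then sdisjF n (a::as) bs
    else false

theorem sdisjF_sound {α : Type*} [LinearOrder α] :
    ∀ (n : Nat) (l1 l2 : List α), l1.Pairwise (· < ·) → l2.Pairwise (· < ·) →
    sdisjF n l1 l2 = true → ∀ x ∈ l1, x ∉ l2
  | 0, _, _, _, _, h => by simp [sdisjF] at h
  | n+1, [], _, _, _, _ => by simp
  | n+1, _::_, [], _, _, _ => by simp
  | n+1, a::as, b::bs, h1, h2, h => by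
    rw [sdisjF] at h
    split_ifs at h with hab hba
    · intro x hx hx2
      rcases List.mem_cons.mp hx with rfl | hx'
      · rcases List.mem_cons.mp hx2 with rfl | hx2'
        · exact absurd hab (lt_irrefl _)
        · exact absurd (hab.trans ((List.pairwise_cons.mp h2).1 _ hx2')) (lt_irrefl x)
      · exact sdisjF_sound n as (b::bs) (List.pairwise_cons.mp h1).2 h2 h x hx' hx2
    · intro x hx hx2
      rcases List.mem_cons.mp hx2 with rfl | hx2'
      · rcases List.mem_cons.mp hx with rfl | hx'
        · exact absurd hba (lt_irrefl _)
        · exact absurd (hba.trans ((List.pairwise_cons.mp h1).1 _ hx')) (lt_irrefl x)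
      · exact sdisjF_sound n (a::as) bs h1 (List.pairwise_cons.mp h2).2 h x hx hx2'

theorem finset_disjoint_of_sdisjF {l1 l2 : List (Fin 623)} {n1 : l1.Nodup} {n2 : l2.Nodup}
    (h1 : l1.Pairwise (· < ·)) (h2 : l2.Pairwise (· < ·))
    (h : sdisjF 120 l1 l2 = true) :
    Disjoint (⟨(l1 : Multiset (Fin 623)), n1⟩ : Finset (ZMod 623)) ⟨(l2 : Multiset (Fin 623)), n2⟩ := by
  rw [Finset.disjoint_left]
  intro a ha hb
  exact sdisjF_sound 120 l1 l2 h1 h2 h a ha hb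

def L0 : List (Fin 623) := [1, 2, 3, 18, 34, 35, 37, 38, 40, 41, 75, 127, 145, 161, 162, 164, 175, 179, 180, 182, 202, 213, 215, 216, 220, 228, 246, 250, 373, 377, 395, 403, 407, 408, 410, 421, 441, 443, 444, 448, 459, 461, 462, 478, 496, 548, 582, 583, 585, 586, 588, 589, 605, 620, 621, 622]
def L1 : List (Fin 623) := [8, 16, 23, 24, 42, 45, 50, 66, 86, 99, 109, 131, 141, 144, 149, 154, 165, 186, 194, 210, 230, 253, 272, 280, 295, 296, 303, 304, 319, 320, 327, 328, 343, 351, 370, 393, 413, 429, 437, 458, 469, 474, 479, 482, 492, 514, 524, 537, 557, 573, 578, 581, 599, 600, 607, 615]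
def L2 : List (Fin 623) := [14, 29, 54, 60, 64, 65, 68, 74, 94, 95, 118, 124, 128, 132, 155, 169, 184, 189, 192, 198, 223, 242, 249, 252, 263, 287, 306, 307, 316, 317, 336, 360, 371, 374, 381, 400, 425, 431, 434, 439, 454, 468, 491, 495, 499, 505, 528, 529, 549, 555, 558, 559, 563, 569, 594, 609]
def L3 : List (Fin 623) := [6, 31, 36, 44, 67, 79, 85, 103, 106, 111, 112, 123, 129, 137, 143, 147, 190, 191, 196, 222, 226, 232, 235, 254, 266, 285, 290, 302, 321, 333, 338, 357, 369, 388, 391, 397, 401, 427, 432, 433, 476, 480, 486, 494, 500, 511, 512, 517, 520, 538, 544, 556, 579, 587, 592, 617]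
def L4 : List (Fin 623) := [9, 11, 13, 48, 57, 61, 70, 76, 87, 93, 102, 150, 163, 172, 201, 212, 214, 225, 248, 259, 262, 265, 271, 273, 274, 282, 288, 301, 322, 335, 341, 349, 350, 352, 358, 361, 364, 375, 398, 409, 411, 422, 451, 460, 473, 521, 530, 536, 547, 553, 562, 566, 575, 610, 612, 614]
def L5 : List (Fin 623) := [15, 46, 58, 63, 69, 72, 73, 84, 88, 104, 115, 121, 130, 135, 157, 167, 173, 188, 193, 203, 227, 236, 239, 251, 261, 299, 300, 308, 315, 323, 324, 362, 372, 384, 387, 396, 420, 430, 435, 450, 456, 466, 488, 493, 502, 508, 519, 535, 539, 550, 551, 554, 560, 565, 577, 608]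
def L6 : List (Fin 623) := [10, 19, 28, 39, 43, 47, 49, 53, 71, 81, 90, 92, 100, 119, 120, 138, 139, 159, 166, 206, 209, 219, 245, 255, 258, 278, 297, 298, 325, 326, 345, 365, 368, 378, 404, 414, 417, 457, 464, 484, 485, 503, 504, 523, 531, 533, 542, 552, 570, 574, 576, 580, 584, 595, 604, 613]
def L7 : List (Fin 623) := [25, 26, 55, 80, 82, 91, 97, 108, 113, 116, 117, 134, 142, 152, 171, 177, 195, 197, 199, 221, 224, 231, 247, 268, 279, 286, 294, 311, 312, 329, 337, 344, 355, 376, 392, 399, 402, 424, 426, 428, 446, 452, 471, 481, 489, 506, 507, 510, 515, 526, 532, 541, 543, 568, 597, 598]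
def L8 : List (Fin 623) := [4, 17, 21, 30, 33, 77, 101, 105, 107, 110, 122, 140, 153, 170, 174, 183, 200, 204, 208, 241, 260, 275, 277, 281, 293, 305, 309, 310, 313, 314, 318, 330, 342, 346, 348, 363, 382, 415, 419, 423, 440, 449, 453, 470, 483, 501, 513, 516, 518, 522, 546, 590, 593, 602, 606, 619]
def L9 : List (Fin 623) := [7, 12, 20, 22, 32, 52, 59, 114, 126, 136, 146, 148, 168, 185, 205, 211, 217, 218, 233, 237, 240, 244, 257, 264, 269, 270, 276, 292, 331, 347, 353, 354, 359, 366, 379, 383, 386, 390, 405, 406, 412, 418, 438, 455, 475, 477, 487, 497, 509, 564, 571, 591, 601, 603, 611, 616]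
def L10 : List (Fin 623) := [5, 27, 51, 56, 62, 78, 83, 96, 98, 125, 133, 151, 156, 158, 160, 176, 181, 187, 207, 229, 234, 238, 243, 256, 283, 284, 289, 291, 332, 334, 339, 340, 367, 380, 385, 389, 394, 416, 436, 442, 447, 463, 465, 467, 472, 490, 498, 525, 527, 540, 545, 561, 567, 572, 596, 618]

def Lfun : Fin 11 → List (Fin 623) := ![L0, L1, L2, L3, L4, L5, L6, L7, L8, L9, L10]

set_option maxRecDepth 10000 in
set_option maxHeartbeats 1000000 in
lemma chainAll : ∀ i, (Lfun i).Pairwise (· < ·) := by decide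

set_option maxRecDepth 10000 in
lemma nodupAll : ∀ i, (Lfun i).Nodup := by decide

def Dfun (i : Fin 11) : Finset (ZMod 623) :=
  ⟨((Lfun i : List (Fin 623)) : Multiset (Fin 623)), nodupAll i⟩

set_option maxRecDepth 10000 in
set_option maxHeartbeats 1000000 in
lemma sdisjAll : ∀ i j : Fin 11, i ≠ j → sdisjF 120 (Lfun i) (Lfun j) = true := by decide

lemma dDisj : ∀ i j : Fin 11, i ≠ j → Disjoint (Dfun i) (Dfun j) := fun i j hij =>
  finset_disjoint_of_sdisjF (chainAll i) (chainAll j) (sdisjAll i j hij)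

set_option maxRecDepth 100000 in
set_option maxHeartbeats 16000000 in
lemma dEq : ∀ i, diffSet (dilate i) = Dfun i := by decide

set_option maxRecDepth 10000 in
set_option maxHeartbeats 1000000 in
lemma dCard : ∀ i, (Dfun i).card = 56 := by decide

set_option maxRecDepth 10000 in
set_option maxHeartbeats 1000000 in
lemma dH : ∀ i, Disjoint (Dfun i) Hblock := by decide

set_option maxRecDepth 10000 in
lemma dZero : ∀ i, (0 : ZMod 623) ∉ Dfun i := by decide

set_option maxRecDepth 10000 in
set_option maxHeartbeats 1000000 in
lemma dU : (Hblock \ {0}) ∪ (Finset.univ.biUnion fun i => Dfun i) = Finset.univ \ {0} := by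
  apply Finset.eq_of_subset_of_card_le
  · intro x hx
    simp only [Finset.mem_union, Finset.mem_sdiff, Finset.mem_singleton,
      Finset.mem_biUnion, Finset.mem_univ, true_and] at hx ⊢
    rcases hx with ⟨_, h0⟩ | ⟨i, hi⟩
    · exact h0
    · rintro rfl; exact dZero i hi
  · have hcard : (Finset.univ.biUnion fun i => Dfun i).card = 616 := by
      rw [Finset.card_biUnion (fun i _ j _ hij => dDisj i j hij)]
      simp [dCard]
    have hdisj : Disjoint (Hblock \ {0}) (Finset.univ.biUnion fun i => Dfun i) := by
      apply Finset.disjoint_right.mpr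
      intro x hx
      simp only [Finset.mem_biUnion, Finset.mem_univ, true_and] at hx
      obtain ⟨i, hi⟩ := hx
      intro hxH
      exact Finset.disjoint_left.mp (dH i) hi (Finset.mem_sdiff.mp hxH).1
    rw [Finset.card_union_of_disjoint hdisj, hcard]
    have h1 : (Hblock \ ({0} : Finset (ZMod 623))).card = 6 := by decide
    have h2 : ((Finset.univ : Finset (ZMod 623)) \ {0}).card = 622 := by
      rw [Finset.card_sdiff_of_subset (by simp)]
      simp [ZMod.card]
    omega

set_option maxRecDepth 10000 in
set_option maxHeartbeats 1600000 in
/-- `H` is a subgroup of `ℤ/623ℤ` of order `7`, and the eleven difference sets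
`Δ(8ⁱ · B)`, `i = 0, …, 10`, are pairwise disjoint, each has cardinality `56`,
each is disjoint from `H`, and their union together with `H \ {0}` is
`ℤ/623ℤ \ {0}`. -/
theorem one_rotational_difference_family_zmod_623_10 :
    (∃ S : AddSubgroup (ZMod 623), (S : Set (ZMod 623)) = (Hblock : Set (ZMod 623))) ∧
    Hblock.card = 7 ∧
    (∀ i j, i ≠ j → Disjoint (diffSet (dilate i)) (diffSet (dilate j))) ∧
    (∀ i, (diffSet (dilate i)).card = 56) ∧
    (∀ i, Disjoint (diffSet (dilate i)) Hblock) ∧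
    (Hblock \ {0}) ∪ (Finset.univ.biUnion fun i => diffSet (dilate i)) =
      Finset.univ \ {0} := by
  simp only [dEq]
  refine ⟨⟨⟨⟨⟨(Hblock : Set (ZMod 623)), ?_⟩, ?_⟩, ?_⟩, rfl⟩, by decide, dDisj, dCard, dH, dU⟩
  · intro a b ha hb
    rw [Finset.mem_coe] at ha hb ⊢
    fin_cases ha <;> fin_cases hb <;> decide
  · decide
  · intro a ha
    rw [Finset.mem_coe] at ha ⊢
    fin_cases ha <;> decide
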